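/- arXiv:2507.13421 — 4 statements merged into one kernel-verified Lean document; each statement's English description precedes it below -/
import Mathlib

section
/- Let n be a positive integer and let (x_i, y_i) for i = 1,...,2n be pairs of nonnegative reals. Then there exists a choice function ε : {1,...,n} → {0,1} selecting one element from each of the pairs {(x_{σ(2i-1)}, y_{σ(2i-1)}), (x_{σ(2i)}, y_{σ(2i)})} (after sorting so that x-coordinates are nonincreasing), such that both the difference in total x-values between the selected and unselected elements has absolute value at most max_i x_i, and the difference in total y-values has absolute value at most max_i y_i. -/
open Classical in
/-- Greedy partial sums: at each step add `-|b k|` if current sum is nonnegative,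
else `|b k|`. -/
noncomputable def pairSelS (b : ℕ → ℝ) : ℕ → ℝ
  | 0 => 0
  | k + 1 => pairSelS b k + (if 0 ≤ pairSelS b k then -|b k| else |b k|)

open Classical in
noncomputable def pairSelE (b : ℕ → ℝ) (k : ℕ) : Bool :=
  if 0 ≤ pairSelS b k then (if b k ≤ 0 then true else false)
  else (if 0 ≤ b k then true else false)

lemma pairSelE_term (b : ℕ → ℝ) (k : ℕ) :
    (if pairSelE b k then b k else -b k)
      = (if 0 ≤ pairSelS b k then -|b k| else |b k|) := by
  classical
  by_cases h1 : 0 ≤ pairSelS b k <;> by_cases h2 : b k ≤ 0 <;>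
      simp only [pairSelE, h1, h2, if_true, if_false]
  · rw [abs_of_nonpos h2]; ring
  · rw [abs_of_nonneg (le_of_not_ge h2)]; simp
  · by_cases h3 : 0 ≤ b k
    · simp only [h3, if_true]; rw [abs_of_nonneg h3]
    · simp only [h3, if_false]; rw [abs_of_nonpos h2]; simp
  · have h3 : 0 ≤ b k := le_of_not_ge h2
    simp only [h3, if_true]
    rw [abs_of_nonneg h3]

lemma pairSelS_sum (b : ℕ → ℝ) (k : ℕ) :
    ∑ i ∈ Finset.range k, (if pairSelE b i then b i else -b i) = pairSelS b k := by
  induction k with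
  | zero => simp [pairSelS]
  | succ k ih => rw [Finset.sum_range_succ, ih, pairSelE_term]; rfl

lemma pairSelS_bound (b : ℕ → ℝ) (M : ℝ) (hb : ∀ i, |b i| ≤ M) :
    ∀ k, |pairSelS b k| ≤ M := by
  have hM : 0 ≤ M := le_trans (abs_nonneg _) (hb 0)
  intro k
  induction k with
  | zero => simpa [pairSelS] using hM
  | succ k ih =>
    rw [abs_le] at ih ⊢
    by_cases h : 0 ≤ pairSelS b k <;>
      simp only [pairSelS, h, if_true, if_false] <;>
      constructor <;> nlinarith [hb k, abs_nonneg (b k), neg_abs_le (b k), le_abs_self (b k)]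

lemma pairSel_tele : ∀ (n : ℕ) (f : ℕ → ℝ), (∀ i j, i ≤ j → f j ≤ f i) → (∀ i, 0 ≤ f i) →
    ∑ i ∈ Finset.range n, (f (2 * i) - f (2 * i + 1)) ≤ f 0 := by
  intro n
  induction n with
  | zero => intro f _ hf0; simpa using hf0 0
  | succ n ih =>
    intro f hmono hf0
    rw [Finset.sum_range_succ']
    have h1 : ∀ i ∈ Finset.range n, f (2 * (i + 1)) - f (2 * (i + 1) + 1)
        = (fun k => f (k + 2)) (2 * i) - (fun k => f (k + 2)) (2 * i + 1) := by
      intro i _; simp; ring_nf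
    rw [Finset.sum_congr rfl h1]
    have h2 := ih (fun k => f (k + 2)) (fun i j hij => hmono _ _ (by omega)) (fun i => hf0 _)
    have h3 : f 2 ≤ f 1 := hmono 1 2 (by omega)
    simp only at h2 ⊢
    linarith

/-- Given `2n` pairs of nonnegative reals `(x i, y i)`, sorted by a permutation `σ` so that
the `x`-coordinates are nonincreasing, and paired consecutively, there is a choice of one
element from each pair (for child A, the other going to child B) such that the imbalance in
total `x`-values and the imbalance in total `y`-values are bounded by `max x` and `max y`
respectively. -/
theorem pair_selection (n : ℕ) (hn : 0 < n) (x y : Fin (2 * n) → ℝ)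
    (hx : ∀ i, 0 ≤ x i) (hy : ∀ i, 0 ≤ y i)
    (σ : Equiv.Perm (Fin (2 * n)))
    (hsort : ∀ i j : Fin (2 * n), i ≤ j → x (σ j) ≤ x (σ i)) :
    ∃ ε : Fin n → Bool,
      |∑ i : Fin n, (if ε i then
            x (σ ⟨2 * i, by omega⟩) - x (σ ⟨2 * i + 1, by omega⟩)
          else
            x (σ ⟨2 * i + 1, by omega⟩) - x (σ ⟨2 * i, by omega⟩))|
        ≤ Finset.univ.sup' (by simp [Finset.univ_nonempty_iff]; exact ⟨⟨0, by omega⟩⟩) x ∧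
      |∑ i : Fin n, (if ε i then
            y (σ ⟨2 * i, by omega⟩) - y (σ ⟨2 * i + 1, by omega⟩)
          else
            y (σ ⟨2 * i + 1, by omega⟩) - y (σ ⟨2 * i, by omega⟩))|
        ≤ Finset.univ.sup' (by simp [Finset.univ_nonempty_iff]; exact ⟨⟨0, by omega⟩⟩) y := by
  classical
  set My : ℝ := Finset.univ.sup' (by simp [Finset.univ_nonempty_iff]; exact ⟨⟨0, by omega⟩⟩) y
    with hMy
  set Mx : ℝ := Finset.univ.sup' (by simp [Finset.univ_nonempty_iff]; exact ⟨⟨0, by omega⟩⟩) x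
    with hMx
  have hyM : ∀ i, y i ≤ My := fun i => Finset.le_sup' y (Finset.mem_univ i)
  have hxM : ∀ i, x i ≤ Mx := fun i => Finset.le_sup' x (Finset.mem_univ i)
  have hMy0 : 0 ≤ My := le_trans (hy ⟨0, by omega⟩) (hyM ⟨0, by omega⟩)
  -- the nat-indexed y differences
  set b : ℕ → ℝ := fun k =>
    if h : k < n then y (σ ⟨2 * k, by omega⟩) - y (σ ⟨2 * k + 1, by omega⟩) else 0 with hbdef
  have hb : ∀ k, |b k| ≤ My := by
    intro k
    by_cases h : k < n
    · simp only [hbdef, dif_pos h]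
      rw [abs_sub_le_iff]
      constructor
      · linarith [hyM (σ ⟨2 * k, by omega⟩), hy (σ ⟨2 * k + 1, by omega⟩)]
      · linarith [hyM (σ ⟨2 * k + 1, by omega⟩), hy (σ ⟨2 * k, by omega⟩)]
    · simpa [hbdef, dif_neg h] using hMy0
  refine ⟨fun i => pairSelE b i, ?_, ?_⟩
  · -- x part: any choice works
    have habs : ∀ i : Fin n,
        |(if pairSelE b i then
            x (σ ⟨2 * i, by omega⟩) - x (σ ⟨2 * i + 1, by omega⟩)
          else
            x (σ ⟨2 * i + 1, by omega⟩) - x (σ ⟨2 * i, by omega⟩))|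
        = x (σ ⟨2 * i, by omega⟩) - x (σ ⟨2 * i + 1, by omega⟩) := by
      intro i
      have hle : x (σ ⟨2 * (i : ℕ) + 1, by omega⟩) ≤ x (σ ⟨2 * (i : ℕ), by omega⟩) :=
        hsort _ _ (by simp [Fin.le_def])
      by_cases h : pairSelE b i
      · rw [if_pos h, abs_of_nonneg (by linarith)]
      · rw [if_neg h, abs_sub_comm, abs_of_nonneg (by linarith)]
    calc |∑ i : Fin n, (if pairSelE b i then
            x (σ ⟨2 * i, by omega⟩) - x (σ ⟨2 * i + 1, by omega⟩)
          else
            x (σ ⟨2 * i + 1, by omega⟩) - x (σ ⟨2 * i, by omega⟩))|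
        ≤ ∑ i : Fin n, |(if pairSelE b i then
            x (σ ⟨2 * i, by omega⟩) - x (σ ⟨2 * i + 1, by omega⟩)
          else
            x (σ ⟨2 * i + 1, by omega⟩) - x (σ ⟨2 * i, by omega⟩))| :=
          Finset.abs_sum_le_sum_abs _ _
      _ = ∑ i : Fin n, (x (σ ⟨2 * i, by omega⟩) - x (σ ⟨2 * i + 1, by omega⟩)) :=
          Finset.sum_congr rfl (fun i _ => habs i)
      _ ≤ Mx := by
          -- telescoping bound
          set f : ℕ → ℝ := fun k => x (σ ⟨min k (2 * n - 1), by omega⟩) with hfdef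
          have hfmono : ∀ i j, i ≤ j → f j ≤ f i := by
            intro i j hij
            exact hsort _ _ (by simp [Fin.le_def]; omega)
          have hf0 : ∀ i, 0 ≤ f i := fun i => hx _
          have key := pairSel_tele n f hfmono hf0
          have heq : ∑ i : Fin n, (x (σ ⟨2 * i, by omega⟩) - x (σ ⟨2 * i + 1, by omega⟩))
              = ∑ i ∈ Finset.range n, (f (2 * i) - f (2 * i + 1)) := by
            rw [Finset.sum_range fun i => f (2 * i) - f (2 * i + 1)]
            refine Finset.sum_congr rfl (fun i _ => ?_)
            have h1 : (⟨2 * (i : ℕ), by omega⟩ : Fin (2 * n))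
                = ⟨min (2 * (i : ℕ)) (2 * n - 1), by omega⟩ := by
              ext; simp; omega
            have h2 : (⟨2 * (i : ℕ) + 1, by omega⟩ : Fin (2 * n))
                = ⟨min (2 * (i : ℕ) + 1) (2 * n - 1), by omega⟩ := by
              ext; simp; omega
            rw [hfdef]
            simp only
            rw [← h1, ← h2]
          rw [heq]
          refine le_trans key ?_
          have : f 0 = x (σ ⟨0, by omega⟩) := by
            simp [hfdef]
          rw [this]
          exact hxM _
  · -- y part: greedy choice
    have heq : ∑ i : Fin n, (if pairSelE b i then
            y (σ ⟨2 * i, by omega⟩) - y (σ ⟨2 * i + 1, by omega⟩)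
          else
            y (σ ⟨2 * i + 1, by omega⟩) - y (σ ⟨2 * i, by omega⟩))
        = ∑ i ∈ Finset.range n, (if pairSelE b i then b i else -b i) := by
      rw [Finset.sum_range fun i => if pairSelE b i then b i else -b i]
      refine Finset.sum_congr rfl (fun i _ => ?_)
      have hbi : b (i : ℕ) = y (σ ⟨2 * (i : ℕ), by omega⟩) - y (σ ⟨2 * (i : ℕ) + 1, by omega⟩) := by
        simp [hbdef, i.isLt]
      rw [hbi]
      by_cases h : pairSelE b i
      · simp [h]
      · simp [h]
    rw [heq, pairSelS_sum]
    exact pairSelS_bound b My hb n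
end

section
/- (Gale's lemma) For all positive integers n' and m there exist 2n' + m points on the unit sphere S^m ⊂ ℝ^{m+1} such that every open half-space determined by a hyperplane through the origin contains at least n' of the points. -/
/-!
Put `2n' + m` points on the moment curve `γ(t) = (1, t, …, t^m)` at `t = 0, 1, …`, normalised
and with alternating signs: `p i = (-1)^i γ(i) / ‖γ(i)‖`. A nonzero functional `f` restricts to a
nonzero polynomial `q` of degree `≤ m` on the curve, and `f (p i) > 0` iff `(-1)^i q(i) > 0`. If no
`q(i)` vanishes, two consecutive indices that both fail this test give a sign change of `q`, hence
a root, so there are at most `m` of them; an indicator sequence of length `N` with at most `m` such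
adjacent pairs of failures has at least `(N - m - 1) / 2` successes, i.e. at least `n'`. Roots of
`q` at the nodes are removed by adding a small multiple of an interpolating polynomial, which only
turns successes into failures.
-/

open Finset Polynomial Filter Topology
open Nat (count count_succ count_zero count_eq_card_filter_range)

theorem le_two_mul_count_add_count_not_and_not (P : ℕ → Prop) [DecidablePred P] (N : ℕ) :
    N ≤ 2 * count P (N + 1) + count (fun i => ¬P i ∧ ¬P (i + 1)) N := by
  suffices N + (if P N then 1 else 0) ≤
      2 * count P (N + 1) + count (fun i => ¬P i ∧ ¬P (i + 1)) N by
    omega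
  induction N with
  | zero => simp only [count_succ, count_zero]; split_ifs <;> omega
  | succ N ih =>
    simp only [count_succ] at ih ⊢
    split_ifs at ih ⊢ <;> first | omega | tauto

theorem Fin.card_filter_univ_eq_count (P : ℕ → Prop) [DecidablePred P] (N : ℕ) :
    #{i : Fin N | P i} = count P N := by
  rw [count_eq_card_filter_range]
  refine card_bij (fun i _ => i.val) (by simp) (fun _ _ _ _ => Fin.ext) fun k hk => ?_
  rw [mem_filter, mem_range] at hk
  exact ⟨⟨k, hk.1⟩, by simpa using hk.2, rfl⟩

theorem Polynomial.card_le_natDegree_of_injOn_isRoot {R ι : Type*} [CommRing R] [IsDomain R]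
    {q : R[X]} (hq : q ≠ 0) {s : Finset ι} {r : ι → R} (hr : Set.InjOn r s)
    (hroot : ∀ i ∈ s, q.IsRoot (r i)) : #s ≤ q.natDegree := by
  classical
  rw [← card_image_of_injOn hr]
  refine card_le_degree_of_subset_roots fun x hx => ?_
  rw [Finset.mem_val, mem_image] at hx
  obtain ⟨i, hi, rfl⟩ := hx
  exact (mem_roots hq).2 (hroot i hi)

theorem Polynomial.exists_isRoot_mem_Ioo_of_eval_mul_eval_neg (q : ℝ[X]) {a b : ℝ} (hab : a ≤ b)
    (h : q.eval a * q.eval b < 0) : ∃ r ∈ Set.Ioo a b, q.IsRoot r := by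
  rcases mul_neg_iff.1 h with ⟨ha, hb⟩ | ⟨ha, hb⟩
  · exact intermediate_value_Ioo' hab q.continuousOn ⟨hb, ha⟩
  · exact intermediate_value_Ioo hab q.continuousOn ⟨ha, hb⟩

theorem Polynomial.count_eval_mul_eval_succ_neg_le_natDegree {q : ℝ[X]} (hq : q ≠ 0) {t : ℕ → ℝ}
    (ht : StrictMono t) (N : ℕ) :
    count (fun i => q.eval (t i) * q.eval (t (i + 1)) < 0) N ≤ q.natDegree := by
  classical
  have hroot : ∀ i, q.eval (t i) * q.eval (t (i + 1)) < 0 →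
      ∃ r ∈ Set.Ioo (t i) (t (i + 1)), q.IsRoot r := fun i =>
    q.exists_isRoot_mem_Ioo_of_eval_mul_eval_neg (ht i.lt_succ_self).le
  choose! r hr hroot using hroot
  set S := {i ∈ range N | q.eval (t i) * q.eval (t (i + 1)) < 0}
  have hmono : StrictMonoOn r S := by
    intro i hi j hj hij
    have hi := (mem_filter.1 hi).2
    have hj := (mem_filter.1 hj).2
    calc r i < t (i + 1) := (hr i hi).2
      _ ≤ t j := ht.monotone hij
      _ < r j := (hr j hj).1
  rw [count_eq_card_filter_range]
  exact card_le_natDegree_of_injOn_isRoot hq hmono.injOn fun i hi => hroot i (mem_filter.1 hi).2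

theorem Polynomial.exists_natDegree_le_eval_ne_zero_pos_imp {ι : Type*} (s : Finset ι)
    {t : ι → ℝ} (ht : Set.InjOn t s) {c : ι → ℝ} (hc : ∀ i ∈ s, c i ≠ 0) {q : ℝ[X]} (hq : q ≠ 0) :
    ∃ q' : ℝ[X], q'.natDegree ≤ q.natDegree ∧ ∀ i ∈ s,
      q'.eval (t i) ≠ 0 ∧ (0 < c i * q'.eval (t i) → 0 < c i * q.eval (t i)) := by
  classical
  set Z := {i ∈ s | q.IsRoot (t i)}
  have hZinj : Set.InjOn t Z := ht.mono (filter_subset _ s)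
  have hZ : #Z ≤ q.natDegree :=
    card_le_natDegree_of_injOn_isRoot hq hZinj fun i hi => (mem_filter.1 hi).2
  -- `h` takes the value `-c i` at the roots of `q` among the nodes, so `q + ε h` has sign `-c i`
  -- there for every `ε > 0`.
  set h := Lagrange.interpolate Z t fun i => -c i
  have hh : h.natDegree ≤ q.natDegree := natDegree_le_of_degree_le
    ((Lagrange.degree_interpolate_lt _ hZinj).le.trans (by exact_mod_cast hZ))
  have hsmall : ∀ᶠ ε in 𝓝 (0 : ℝ), ∀ i ∈ s, ¬q.IsRoot (t i) →
      0 < q.eval (t i) * (q.eval (t i) + ε * h.eval (t i)) := by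
    refine (eventually_all_finset s).2 fun i _ => ?_
    by_cases hi : q.IsRoot (t i)
    · exact Eventually.of_forall fun _ h => absurd hi h
    refine (Tendsto.eventually_const_lt (mul_self_pos.2 hi) ?_).mono fun _ h _ => h
    exact Continuous.tendsto' (by fun_prop) _ _ (by simp)
  obtain ⟨ε, hε, hεpos⟩ := (hsmall.filter_mono nhdsWithin_le_nhds).and
    self_mem_nhdsWithin |>.exists (f := 𝓝[>] (0 : ℝ))
  refine ⟨q + C ε * h, (natDegree_add_le _ _).trans
    (max_le le_rfl ((natDegree_C_mul_le _ _).trans hh)), fun i hi => ?_⟩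
  rw [eval_add, eval_mul, eval_C]
  by_cases hroot : q.IsRoot (t i)
  · have hval : h.eval (t i) = -c i := Lagrange.eval_interpolate_at_node _ hZinj
      (mem_filter.2 ⟨hi, hroot⟩)
    rw [hroot.eq_zero, hval]
    have hcc : 0 < c i * c i := mul_self_pos.2 (hc i hi)
    exact ⟨by simp [hεpos.ne', hc i hi], fun h => by nlinarith⟩
  · have := hε i hi hroot
    refine ⟨fun h => by simp [h] at this, fun h' => ?_⟩
    set b := q.eval (t i) + ε * h.eval (t i)
    nlinarith [mul_pos h' this, sq_nonneg b]

theorem Polynomial.le_two_mul_count_neg_one_pow_mul_eval_pos_add_natDegree_of_eval_ne_zero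
    {q : ℝ[X]} {N : ℕ} (hq : ∀ i ≤ N, q.eval (i : ℝ) ≠ 0) :
    N ≤ 2 * count (fun i => 0 < (-1) ^ i * q.eval (i : ℝ)) (N + 1) + q.natDegree := by
  have hq0 : q ≠ 0 := fun h => hq 0 N.zero_le (by simp [h])
  have hchange : ∀ i < N, ¬0 < (-1) ^ i * q.eval (i : ℝ) ∧
      ¬0 < (-1) ^ (i + 1) * q.eval ((i + 1 : ℕ) : ℝ) →
      q.eval (i : ℝ) * q.eval ((i + 1 : ℕ) : ℝ) < 0 := by
    intro i hi ⟨h₀, h₁⟩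
    have hw₀ : (-1) ^ i * q.eval (i : ℝ) < 0 :=
      (not_lt.1 h₀).lt_of_ne (mul_ne_zero (by simp) (hq i hi.le))
    have hw₁ : (-1) ^ (i + 1) * q.eval ((i + 1 : ℕ) : ℝ) < 0 :=
      (not_lt.1 h₁).lt_of_ne (mul_ne_zero (by simp) (hq (i + 1) hi))
    have hsq : ((-1 : ℝ) ^ i) ^ 2 = 1 := by rw [← pow_mul, mul_comm, pow_mul, neg_one_sq, one_pow]
    have hprod : (-1) ^ i * q.eval (i : ℝ) * ((-1) ^ (i + 1) * q.eval ((i + 1 : ℕ) : ℝ)) =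
        -(q.eval (i : ℝ) * q.eval ((i + 1 : ℕ) : ℝ)) := by
      rw [pow_succ]
      linear_combination -(q.eval (i : ℝ) * q.eval ((i + 1 : ℕ) : ℝ)) * hsq
    linarith [mul_pos_of_neg_of_neg hw₀ hw₁]
  calc N ≤ 2 * count (fun i => 0 < (-1) ^ i * q.eval (i : ℝ)) (N + 1) +
        count (fun i => q.eval (i : ℝ) * q.eval ((i + 1 : ℕ) : ℝ) < 0) N :=
        (le_two_mul_count_add_count_not_and_not _ N).trans
          (Nat.add_le_add_left (Nat.count_mono_left hchange) _)
    _ ≤ _ := by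
        gcongr
        exact count_eval_mul_eval_succ_neg_le_natDegree hq0 Nat.strictMono_cast N

noncomputable def momentCurve (m : ℕ) (t : ℝ) : EuclideanSpace ℝ (Fin (m + 1)) :=
  WithLp.toLp 2 fun j => t ^ (j : ℕ)

theorem momentCurve_apply (m : ℕ) (t : ℝ) (j : Fin (m + 1)) : momentCurve m t j = t ^ (j : ℕ) :=
  rfl

theorem momentCurve_ne_zero (m : ℕ) (t : ℝ) : momentCurve m t ≠ 0 := fun h => by
  simpa [momentCurve_apply] using congr_arg (· 0) h

namespace LinearMap

variable {m : ℕ} (f : EuclideanSpace ℝ (Fin (m + 1)) →ₗ[ℝ] ℝ)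

noncomputable def momentPolynomial : ℝ[X] :=
  ∑ j : Fin (m + 1), C (f (EuclideanSpace.single j 1)) * X ^ (j : ℕ)

theorem eval_momentPolynomial (t : ℝ) : f.momentPolynomial.eval t = f (momentCurve m t) := by
  conv_rhs => rw [← (EuclideanSpace.basisFun (Fin (m + 1)) ℝ).toBasis.sum_repr (momentCurve m t)]
  simp only [momentPolynomial, eval_finsetSum, eval_mul, eval_C, eval_pow, eval_X, map_sum,
    map_smul, OrthonormalBasis.coe_toBasis, EuclideanSpace.basisFun_apply,
    OrthonormalBasis.coe_toBasis_repr_apply, EuclideanSpace.basisFun_repr, momentCurve_apply,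
    smul_eq_mul, mul_comm]

theorem natDegree_momentPolynomial_le : f.momentPolynomial.natDegree ≤ m :=
  natDegree_sum_le_of_forall_le _ _ fun j _ =>
    (natDegree_C_mul_X_pow_le _ _).trans (Nat.lt_succ_iff.1 j.isLt)

theorem coeff_momentPolynomial (j : Fin (m + 1)) :
    f.momentPolynomial.coeff j = f (EuclideanSpace.single j 1) := by
  simp [momentPolynomial, coeff_C_mul, coeff_X_pow, Fin.val_inj]

theorem momentPolynomial_ne_zero {f : EuclideanSpace ℝ (Fin (m + 1)) →ₗ[ℝ] ℝ} (hf : f ≠ 0) :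
    f.momentPolynomial ≠ 0 := fun h => hf <|
  (EuclideanSpace.basisFun (Fin (m + 1)) ℝ).toBasis.ext fun j => by
    simpa [h] using (f.coeff_momentPolynomial j).symm

end LinearMap

noncomputable def galePoint (m i : ℕ) : EuclideanSpace ℝ (Fin (m + 1)) :=
  ((-1) ^ i * ‖momentCurve m i‖⁻¹) • momentCurve m i

theorem norm_galePoint (m i : ℕ) : ‖galePoint m i‖ = 1 := by
  simp [galePoint, norm_smul, momentCurve_ne_zero]

theorem galePoint_injective {m : ℕ} (hm : 0 < m) : Function.Injective (galePoint m) := by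
  intro i j hij
  have h₀ := congr_arg (· 0) hij
  have h₁ := congr_arg (· ⟨1, by omega⟩) hij
  simp only [galePoint, PiLp.smul_apply, momentCurve_apply, smul_eq_mul, Fin.val_zero, pow_zero,
    mul_one, pow_one] at h₀ h₁
  rw [h₀] at h₁
  have hne : (-1) ^ j * ‖momentCurve m j‖⁻¹ ≠ 0 := by simp [momentCurve_ne_zero]
  exact_mod_cast mul_left_cancel₀ hne h₁

theorem LinearMap.pos_apply_galePoint_iff {m : ℕ} (f : EuclideanSpace ℝ (Fin (m + 1)) →ₗ[ℝ] ℝ)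
    (i : ℕ) :
    0 < f (galePoint m i) ↔ 0 < (-1) ^ i * f.momentPolynomial.eval (i : ℝ) := by
  rw [galePoint, map_smul, smul_eq_mul, mul_right_comm, f.eval_momentPolynomial,
    mul_pos_iff_of_pos_right (inv_pos.2 (norm_pos_iff.2 (momentCurve_ne_zero m i)))]

theorem Polynomial.le_two_mul_count_neg_one_pow_mul_eval_pos_add_natDegree {q : ℝ[X]}
    (hq : q ≠ 0) (N : ℕ) :
    N ≤ 2 * count (fun i => 0 < (-1) ^ i * q.eval (i : ℝ)) (N + 1) + q.natDegree := by
  obtain ⟨q', hdeg, hq'⟩ := exists_natDegree_le_eval_ne_zero_pos_imp (range (N + 1))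
    Nat.cast_injective.injOn (c := fun i => (-1) ^ i) (fun _ _ => by simp) hq
  calc N ≤ 2 * count (fun i => 0 < (-1) ^ i * q'.eval (i : ℝ)) (N + 1) + q'.natDegree :=
        le_two_mul_count_neg_one_pow_mul_eval_pos_add_natDegree_of_eval_ne_zero fun i hi =>
          (hq' i (mem_range.2 (Nat.lt_succ_of_le hi))).1
    _ ≤ _ := add_le_add (Nat.mul_le_mul_left 2
        (Nat.count_mono_left fun i hi => (hq' i (mem_range.2 hi)).2)) hdeg

theorem gale_lemma_general (n' m : ℕ) (hm : 0 < m) :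
    ∃ p : Fin (2 * n' + m) → EuclideanSpace ℝ (Fin (m + 1)),
      Function.Injective p ∧ (∀ i, ‖p i‖ = 1) ∧
      ∀ f : EuclideanSpace ℝ (Fin (m + 1)) →ₗ[ℝ] ℝ, f ≠ 0 →
        n' ≤ (Finset.univ.filter fun i => 0 < f (p i)).card := by
  refine ⟨fun i => galePoint m i, (galePoint_injective hm).comp Fin.val_injective,
    fun i => norm_galePoint m i, fun f hf => ?_⟩
  have hcount := le_two_mul_count_neg_one_pow_mul_eval_pos_add_natDegree
    (LinearMap.momentPolynomial_ne_zero hf) (2 * n' + m - 1)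
  rw [Nat.sub_add_cancel (by omega)] at hcount
  simp only [f.pos_apply_galePoint_iff]
  rw [Fin.card_filter_univ_eq_count fun i => 0 < (-1) ^ i * f.momentPolynomial.eval (i : ℝ)]
  have := f.natDegree_momentPolynomial_le
  omega

/-- Gale's lemma: there exist `2n' + m` points on the unit sphere `S^m ⊂ ℝ^(m+1)` such that
every open half-space determined by a hyperplane through the origin contains at least `n'`
of the points. -/
theorem gale_lemma (n' m : ℕ) (hn' : 0 < n') (hm : 0 < m) :
    ∃ p : Fin (2 * n' + m) → EuclideanSpace ℝ (Fin (m + 1)),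
      Function.Injective p ∧ (∀ i, ‖p i‖ = 1) ∧
      ∀ f : EuclideanSpace ℝ (Fin (m + 1)) →ₗ[ℝ] ℝ, f ≠ 0 →
        n' ≤ (Finset.univ.filter fun i => 0 < f (p i)).card :=
  gale_lemma_general n' m hm
end

section
/- For positive integers m, the points v_i = w(t_i)/‖w(t_i)‖ where w(t) = (1, t, t², ..., t^m) evaluated at 2n'+m distinct reals t_1 < ... < t_{2n'+m}, with signs alternating (i.e., take (−1)^i · w(t_i)/‖w(t_i)‖), have the property that every hyperplane through the origin in ℝ^{m+1} has at least n' of these points strictly on each side. -/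
/-!
For `f ≠ 0` the function `s ↦ f (w s)` is a nonzero real polynomial `P` of degree at most `m`,
and `f (v i)` has the sign of `(-1) ^ i * P (t i)`. Induct on `m`. If `P` has no real root it has
constant sign, so these signs alternate and each occurs at least `n'` times among the
`2 n' + m ≥ 2 n'` points. If `P x = 0`, write `P = (X - x) * R` and delete the index `j` at which
`x` separates the increasing sequence `t`: on the remaining `2 n' + (m - 1)` points the signs of
`(-1) ^ k * R` are opposite to those of `(-1) ^ i * P`, because below `j` the factor `t i - x` is
negative and above `j` the index has shifted by one.
-/

open Finset Polynomial

lemma le_card_filter_neg_one_pow_mul_pos {n m : ℕ} {c : Fin (2 * n + m) → ℝ}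
    (hc : (∀ i, 0 < c i) ∨ ∀ i, c i < 0) :
    n ≤ #{i : Fin (2 * n + m) | 0 < (-1) ^ (i : ℕ) * c i} := by
  obtain ⟨r, hr, hc⟩ : ∃ r < 2, ∀ i, 0 < (-1) ^ r * c i := by
    rcases hc with hc | hc
    · exact ⟨0, by norm_num, by simpa using hc⟩
    · exact ⟨1, by norm_num, by simpa using hc⟩
  calc n = #(univ : Finset (Fin n)) := (card_fin n).symm
    _ ≤ _ := by
      refine card_le_card_of_injOn (fun k => ⟨2 * k + r, by omega⟩) (fun k _ => ?_) ?_
      · simpa [pow_add, pow_mul] using hc _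
      · intro k _ l _ hkl
        have := congrArg Fin.val hkl
        simp only at this
        omega

lemma Polynomial.exists_isRoot_of_eval_mul_eval_nonpos {P : ℝ[X]} {a b : ℝ}
    (h : P.eval a * P.eval b ≤ 0) : ∃ x, P.IsRoot x := by
  have h0 : (0 : ℝ) ∈ Set.uIcc (P.eval a) (P.eval b) := by
    rcases mul_nonpos_iff.1 h with h | h <;> simp [Set.mem_uIcc, h]
  obtain ⟨x, -, hx⟩ := intermediate_value_uIcc P.continuousOn h0
  exact ⟨x, hx⟩

lemma Polynomial.eval_pos_or_eval_neg_of_forall_not_isRoot {P : ℝ[X]}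
    (hP : ∀ x, ¬ P.IsRoot x) : (∀ x, 0 < P.eval x) ∨ ∀ x, P.eval x < 0 := by
  have hsign : ∀ x, 0 < P.eval 0 * P.eval x := fun x =>
    not_le.1 fun h => (exists_isRoot_of_eval_mul_eval_nonpos h).elim fun y hy => hP y hy
  rcases (show P.eval 0 ≠ 0 from hP 0).lt_or_gt with h0 | h0
  · exact Or.inr fun x => neg_of_mul_pos_right (hsign x) h0.le
  · exact Or.inl fun x => pos_of_mul_pos_right (hsign x) h0.le

lemma StrictMono.exists_index_separating {N : ℕ} {t : Fin (N + 1) → ℝ} (ht : StrictMono t)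
    (x : ℝ) : ∃ j, (∀ i < j, t i < x) ∧ ∀ i, j < i → x < t i := by
  by_cases h : ∃ i, x ≤ t i
  · obtain ⟨j, hj, hmin⟩ := WellFounded.has_min wellFounded_lt {i | x ≤ t i} h
    exact ⟨j, fun i hi => not_le.1 fun hx => hmin i hx hi, fun i hi => hj.trans_lt (ht hi)⟩
  · push Not at h
    exact ⟨Fin.last N, fun i _ => h i, fun i hi => absurd hi (Fin.le_last i).not_gt⟩

lemma neg_one_pow_succAbove_mul_pos {N : ℕ} {t : Fin (N + 1) → ℝ} {x : ℝ} {j : Fin (N + 1)}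
    (hlt : ∀ i < j, t i < x) (hgt : ∀ i, j < i → x < t i) {k : Fin N} {a : ℝ}
    (ha : 0 < (-1) ^ (k : ℕ) * -a) :
    0 < (-1) ^ (j.succAbove k : ℕ) * ((t (j.succAbove k) - x) * a) := by
  rcases lt_or_ge k.castSucc j with hk | hk
  · have := hlt _ hk
    rw [Fin.succAbove_of_castSucc_lt _ _ hk, Fin.val_castSucc]
    nlinarith
  · have := hgt _ (hk.trans_lt Fin.castSucc_lt_succ)
    rw [Fin.succAbove_of_le_castSucc _ _ hk, Fin.val_succ, pow_succ]
    nlinarith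

lemma Polynomial.le_card_filter_neg_one_pow_mul_eval_pos_of_forall_not_isRoot {n m : ℕ}
    {P : ℝ[X]} (hP : ∀ x, ¬ P.IsRoot x) (t : Fin (2 * n + m) → ℝ) :
    n ≤ #{i : Fin (2 * n + m) | 0 < (-1) ^ (i : ℕ) * P.eval (t i)} :=
  le_card_filter_neg_one_pow_mul_pos <| (eval_pos_or_eval_neg_of_forall_not_isRoot hP).imp
    (fun h i => h (t i)) fun h i => h (t i)

theorem Polynomial.le_card_filter_neg_one_pow_mul_eval_pos (n m : ℕ) {P : ℝ[X]} (hP : P ≠ 0)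
    (hdeg : P.natDegree ≤ m) {t : Fin (2 * n + m) → ℝ} (ht : StrictMono t) :
    n ≤ #{i : Fin (2 * n + m) | 0 < (-1) ^ (i : ℕ) * P.eval (t i)} := by
  induction m generalizing P with
  | zero =>
    refine le_card_filter_neg_one_pow_mul_eval_pos_of_forall_not_isRoot (fun x hx => ?_) t
    have := natDegree_pos_iff_degree_pos.2 (degree_pos_of_root hP hx)
    omega
  | succ m ih =>
    by_cases hroot : ∃ x, P.IsRoot x
    · obtain ⟨x, hx⟩ := hroot
      obtain ⟨R, rfl⟩ := dvd_iff_isRoot.2 hx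
      have hR : R ≠ 0 := right_ne_zero_of_mul hP
      have hRdeg : (-R).natDegree ≤ m := by
        rw [natDegree_neg]
        rw [natDegree_mul (X_sub_C_ne_zero x) hR, natDegree_X_sub_C] at hdeg
        omega
      obtain ⟨j, hlt, hgt⟩ := ht.exists_index_separating x
      calc n ≤ #{k : Fin (2 * n + m) | 0 < (-1) ^ (k : ℕ) * (-R).eval (t (j.succAbove k))} :=
            ih (neg_ne_zero.2 hR) hRdeg (ht.comp j.strictMono_succAbove)
        _ ≤ _ := by
          refine card_le_card_of_injOn j.succAbove (fun k hk => ?_)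
            Fin.succAbove_right_injective.injOn
          simp only [coe_filter, mem_univ, true_and, Set.mem_ofPred_eq, eval_neg, eval_mul,
            eval_sub, eval_X, eval_C] at hk ⊢
          exact neg_one_pow_succAbove_mul_pos hlt hgt hk
    · push Not at hroot
      exact le_card_filter_neg_one_pow_mul_eval_pos_of_forall_not_isRoot hroot t

lemma LinearMap.exists_polynomial_eval_eq_comp_momentCurve {m : ℕ}
    {f : EuclideanSpace ℝ (Fin (m + 1)) →ₗ[ℝ] ℝ} (hf : f ≠ 0)
    {w : ℝ → EuclideanSpace ℝ (Fin (m + 1))}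
    (hw : ∀ s, ∀ j : Fin (m + 1), w s j = s ^ (j : ℕ)) :
    ∃ P : ℝ[X], P ≠ 0 ∧ P.natDegree ≤ m ∧ ∀ s, P.eval s = f (w s) := by
  set b := PiLp.basisFun 2 ℝ (Fin (m + 1))
  set P : ℝ[X] := ∑ j : Fin (m + 1), C (f (b j)) * X ^ (j : ℕ)
  have hcoeff : ∀ j : Fin (m + 1), P.coeff j = f (b j) := by
    intro j
    rw [finsetSum_coeff, sum_eq_single j (fun i _ hij => by
      rw [coeff_C_mul_X_pow, if_neg (Fin.val_injective.ne hij).symm]) (by simp)]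
    simp
  refine ⟨P, fun hP => hf (b.ext fun j => ?_), ?_, fun s => ?_⟩
  · simpa [hP] using (hcoeff j).symm
  · exact natDegree_sum_le_of_forall_le _ _ fun j _ =>
      (natDegree_C_mul_X_pow_le _ _).trans (Nat.lt_succ_iff.1 j.2)
  · conv_rhs => rw [← b.sum_repr (w s)]
    simp only [P, eval_finsetSum, map_sum, map_smul, eval_mul, eval_C, eval_pow, eval_X,
      smul_eq_mul]
    exact sum_congr rfl fun j _ => by rw [PiLp.basisFun_repr, hw, mul_comm]

theorem gale_moment_curve_general (n' m : ℕ)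
    (t : Fin (2 * n' + m) → ℝ) (ht : StrictMono t)
    (w : ℝ → EuclideanSpace ℝ (Fin (m + 1)))
    (hw : ∀ s, ∀ j : Fin (m + 1), w s j = s ^ (j : ℕ))
    (v : Fin (2 * n' + m) → EuclideanSpace ℝ (Fin (m + 1)))
    (hv : ∀ i, v i = ((-1 : ℝ) ^ (i : ℕ) / ‖w (t i)‖) • w (t i)) :
    ∀ f : EuclideanSpace ℝ (Fin (m + 1)) →ₗ[ℝ] ℝ, f ≠ 0 →
      n' ≤ (Finset.univ.filter fun i => 0 < f (v i)).card ∧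
      n' ≤ (Finset.univ.filter fun i => f (v i) < 0).card := by
  intro f hf
  obtain ⟨P, hP, hdeg, hPf⟩ := f.exists_polynomial_eval_eq_comp_momentCurve hf hw
  have hnorm (i) : 0 < ‖w (t i)‖⁻¹ :=
    inv_pos.2 (norm_pos_iff.2 fun h => by simpa [h] using hw (t i) 0)
  have hfv (i) : f (v i) = ‖w (t i)‖⁻¹ * ((-1) ^ (i : ℕ) * P.eval (t i)) := by
    rw [hv, map_smul, smul_eq_mul, hPf]
    ring
  constructor
  · calc n' ≤ #{i : Fin (2 * n' + m) | 0 < (-1) ^ (i : ℕ) * P.eval (t i)} :=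
          le_card_filter_neg_one_pow_mul_eval_pos n' m hP hdeg ht
      _ = _ := by
        refine congrArg card (filter_congr fun i _ => ?_)
        rw [hfv, mul_pos_iff_of_pos_left (hnorm i)]
  · calc n' ≤ #{i : Fin (2 * n' + m) | 0 < (-1) ^ (i : ℕ) * (-P).eval (t i)} :=
          le_card_filter_neg_one_pow_mul_eval_pos n' m (neg_ne_zero.2 hP)
            (by rwa [natDegree_neg]) ht
      _ = _ := by
        refine congrArg card (filter_congr fun i _ => ?_)
        rw [hfv, eval_neg, mul_neg, ← mul_pos_iff_of_pos_left (hnorm i), mul_neg, neg_pos]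

/-- The alternating-sign moment curve construction proving Gale's lemma: with
`w t = (1, t, t², ..., t^m)` and distinct reals `t 0 < t 1 < ...`, the points
`(-1)^i • w (t i) / ‖w (t i)‖` are such that every hyperplane through the origin in `ℝ^(m+1)`
has at least `n'` of them strictly on each side. -/
theorem gale_moment_curve (n' m : ℕ) (hn' : 0 < n') (hm : 0 < m)
    (t : Fin (2 * n' + m) → ℝ) (ht : StrictMono t)
    (w : ℝ → EuclideanSpace ℝ (Fin (m + 1)))
    (hw : ∀ s, ∀ j : Fin (m + 1), w s j = s ^ (j : ℕ))
    (v : Fin (2 * n' + m) → EuclideanSpace ℝ (Fin (m + 1)))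
    (hv : ∀ i, v i = ((-1 : ℝ) ^ (i : ℕ) / ‖w (t i)‖) • w (t i)) :
    ∀ f : EuclideanSpace ℝ (Fin (m + 1)) →ₗ[ℝ] ℝ, f ≠ 0 →
      n' ≤ (Finset.univ.filter fun i => 0 < f (v i)).card ∧
      n' ≤ (Finset.univ.filter fun i => f (v i) < 0).card :=
  gale_moment_curve_general n' m t ht w hw v hv
end

section
/- Optimality of the cut count: for all positive integers r and m with n ≥ (r−1)m, there exists a configuration of n cookies with m frosting kinds such that any fair division among r children (each receiving exactly 1/r of each frosting kind) requires cutting at least (r−1)m cookies. -/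
/-- Optimality of the cut count: for `n ≥ (r-1)*m` there is a configuration of `n` cookies with
`m` frosting kinds such that any fair division among `r` children must cut at least `(r-1)*m`
cookies. -/
theorem cut_count_optimal (r m n : ℕ) (hr : 0 < r) (hm : 0 < m) (hn : (r - 1) * m ≤ n) :
    ∃ v : Fin n → Fin m → ℝ, (∀ i j, 0 ≤ v i j) ∧
      ∀ w : Fin n → Fin r → Fin m → ℝ,
        (∀ i j k, 0 ≤ w i j k) →
        (∀ i, ∑ j : Fin r, w i j = v i) →
        (∀ j : Fin r, (r : ℝ) • ∑ i, w i j = ∑ i, v i) →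
        (r - 1) * m ≤ (Finset.univ.filter fun i => ∀ j : Fin r, w i j ≠ v i).card := by
  by_cases hr1 : r = 1
  · subst hr1
    exact ⟨0, fun i j => le_refl 0, fun w _ _ _ => by simp⟩
  have h2 : 2 ≤ r := by omega
  set s := r - 1 with hs
  have hspos : 0 < s := by omega
  set v : Fin n → Fin m → ℝ :=
    fun i j => if (i : ℕ) < s * m ∧ (i : ℕ) / s = (j : ℕ) then ((s : ℝ))⁻¹ else 0 with hv
  refine ⟨v, ?_, ?_⟩
  · intro i j
    rw [hv]; dsimp only; split <;> positivity
  intro w hw hsum hfair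
  -- count bound for each kind
  have hcard : ∀ k : Fin m,
      (Finset.univ.filter fun i : Fin n => (i : ℕ) < s * m ∧ (i : ℕ) / s = (k : ℕ)).card ≤ s := by
    intro k
    have h := Finset.card_le_card_of_injOn (f := fun i : Fin n => (i : ℕ) % s)
      (s := Finset.univ.filter fun i : Fin n => (i : ℕ) < s * m ∧ (i : ℕ) / s = (k : ℕ))
      (t := Finset.range s) ?_ ?_
    · exact h.trans (Finset.card_range s).le
    · intro i _
      exact Finset.mem_range.mpr (Nat.mod_lt _ hspos)
    · intro a ha b hb hab
      simp only [Finset.mem_coe, Finset.coe_filter, Set.mem_setOf_eq, Finset.mem_filter, Finset.mem_univ, true_and] at ha hb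
      dsimp only at hab
      have ea : (a : ℕ) = s * (k : ℕ) + (a : ℕ) % s := by
        rw [← ha.2]; exact (Nat.div_add_mod _ _).symm
      have eb : (b : ℕ) = s * (k : ℕ) + (b : ℕ) % s := by
        rw [← hb.2]; exact (Nat.div_add_mod _ _).symm
      exact Fin.ext (by rw [ea, eb, hab])
  -- total of each kind at most 1
  have hT : ∀ k : Fin m, (∑ i, v i) k ≤ 1 := by
    intro k
    rw [Finset.sum_apply]
    have e : ∑ i : Fin n, v i k =
        ((Finset.univ.filter fun i : Fin n =>
          (i : ℕ) < s * m ∧ (i : ℕ) / s = (k : ℕ)).card : ℝ) * (s : ℝ)⁻¹ := by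
      rw [hv]; dsimp only
      rw [← Finset.sum_filter, Finset.sum_const, nsmul_eq_mul]
    rw [e]
    have hc : ((Finset.univ.filter fun i : Fin n =>
        (i : ℕ) < s * m ∧ (i : ℕ) / s = (k : ℕ)).card : ℝ) ≤ (s : ℝ) := by
      exact_mod_cast hcard k
    have hsne : (s : ℝ) ≠ 0 := by positivity
    calc _ ≤ (s : ℝ) * (s : ℝ)⁻¹ := by
            apply mul_le_mul_of_nonneg_right hc (by positivity)
      _ = 1 := mul_inv_cancel₀ hsne
  -- every special cookie must be cut
  have key : ∀ i : Fin n, (i : ℕ) < s * m → ∀ j : Fin r, w i j ≠ v i := by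
    intro i hi j0 heq
    have hkm : (i : ℕ) / s < m := Nat.div_lt_of_lt_mul hi
    set k : Fin m := ⟨(i : ℕ) / s, hkm⟩ with hk
    have hvik : v i k = (s : ℝ)⁻¹ := by
      rw [hv]; dsimp only; rw [if_pos ⟨hi, rfl⟩]
    have hwik : w i j0 k = (s : ℝ)⁻¹ := by rw [heq, hvik]
    have hlow : (s : ℝ)⁻¹ ≤ ∑ i' : Fin n, w i' j0 k := by
      rw [← hwik]
      exact Finset.single_le_sum (f := fun i' => w i' j0 k)
        (fun i' _ => hw i' j0 k) (Finset.mem_univ i)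
    have hfk := congrFun (hfair j0) k
    rw [Pi.smul_apply, smul_eq_mul, Finset.sum_apply] at hfk
    have hchain : (r : ℝ) * (s : ℝ)⁻¹ ≤ 1 := by
      calc (r : ℝ) * (s : ℝ)⁻¹ ≤ (r : ℝ) * ∑ i' : Fin n, w i' j0 k := by
            apply mul_le_mul_of_nonneg_left hlow (by positivity)
        _ = (∑ i, v i) k := hfk
        _ ≤ 1 := hT k
    rw [← div_eq_mul_inv, div_le_one (by exact_mod_cast hspos)] at hchain
    have : r ≤ s := by exact_mod_cast hchain
    omega
  -- conclude
  have final : (Finset.univ : Finset (Fin (s * m))).card ≤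
      (Finset.univ.filter fun i => ∀ j : Fin r, w i j ≠ v i).card := by
    apply Finset.card_le_card_of_injOn (fun i => Fin.castLE hn i)
    · intro i _
      exact Finset.mem_filter.mpr ⟨Finset.mem_univ _, key _ (by simpa using i.isLt)⟩
    · intro a _ b _ hab
      exact Fin.castLE_injective hn hab
  simpa using final
end
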